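/- arXiv:1311.6749 — 2 statements merged into one kernel-verified Lean document; each statement's English description precedes it below -/
import Mathlib

section
/- If the induced operator W̊ on symmetric (0,2)-tensors at a point p vanishes, then the Weyl tensor W vanishes at p. In particular, W̊ is an indefinite endomorphism whenever W_p ≠ 0 (it has both positive and negative eigenvalues, since it is trace-free and nonzero). -/
open scoped BigOperators

/-- The symmetries of an algebraic curvature tensor (given in an orthonormal basis). -/
def RiemSymm (n : ℕ) (W : Fin n → Fin n → Fin n → Fin n → ℝ) : Prop :=
  (∀ i j k l, W i j k l = - W j i k l) ∧
  (∀ i j k l, W i j k l = - W i j l k) ∧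
  (∀ i j k l, W i j k l = W k l i j) ∧
  (∀ i j k l, W i j k l + W j k i l + W k i j l = 0)

/-- The action of a `(0,4)`-tensor on `(0,2)`-tensors:
`(W̊ h)(X,Y) = ∑ W(e_k, X, Y, e_l) h(e_l, e_k)`. -/
def curvAct (n : ℕ) (W : Fin n → Fin n → Fin n → Fin n → ℝ)
    (h : Matrix (Fin n) (Fin n) ℝ) : Matrix (Fin n) (Fin n) ℝ :=
  fun i j => ∑ k, ∑ l, W k i j l * h l k

/-! ### Auxiliary definitions and lemmas -/

def bas (n : ℕ) (a b : Fin n) : Matrix (Fin n) (Fin n) ℝ :=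
  fun l k => (if l = a ∧ k = b then (1:ℝ) else 0) + (if l = b ∧ k = a then 1 else 0)

lemma bas_isSymm (n : ℕ) (a b : Fin n) : (bas n a b).IsSymm := by
  ext i j
  simp [bas, Matrix.transpose_apply, and_comm, add_comm]

lemma curvAct_bas (n : ℕ) (W : Fin n → Fin n → Fin n → Fin n → ℝ) (a b i j : Fin n) :
    curvAct n W (bas n a b) i j = W a i j b + W b i j a := by
  unfold curvAct bas
  simp [mul_add, Finset.sum_add_distrib, ite_and, mul_ite, Finset.sum_ite_eq, Finset.sum_ite_eq']
  ring

def Bform (n : ℕ) (W : Fin n → Fin n → Fin n → Fin n → ℝ)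
    (x y : Matrix (Fin n) (Fin n) ℝ) : ℝ :=
  ∑ i, ∑ j, curvAct n W x i j * y i j

lemma sum_swap' {n : ℕ} (g : Fin n → Fin n → ℝ) : ∑ i, ∑ j, g i j = ∑ j, ∑ i, g i j :=
  Finset.sum_comm

lemma sum4_rev {n : ℕ} (f : Fin n → Fin n → Fin n → Fin n → ℝ) :
    ∑ i, ∑ j, ∑ k, ∑ l, f i j k l = ∑ i, ∑ j, ∑ k, ∑ l, f l k j i := by
  calc ∑ i, ∑ j, ∑ k, ∑ l, f i j k l
      = ∑ i, ∑ j, ∑ l, ∑ k, f i j k l :=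
        Finset.sum_congr rfl fun i _ => Finset.sum_congr rfl fun j _ => sum_swap' _
    _ = ∑ i, ∑ l, ∑ j, ∑ k, f i j k l :=
        Finset.sum_congr rfl fun i _ => sum_swap' _
    _ = ∑ l, ∑ i, ∑ j, ∑ k, f i j k l := sum_swap' _
    _ = ∑ l, ∑ i, ∑ k, ∑ j, f i j k l :=
        Finset.sum_congr rfl fun l _ => Finset.sum_congr rfl fun i _ => sum_swap' _
    _ = ∑ l, ∑ k, ∑ i, ∑ j, f i j k l :=
        Finset.sum_congr rfl fun l _ => sum_swap' _
    _ = ∑ l, ∑ k, ∑ j, ∑ i, f i j k l :=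
        Finset.sum_congr rfl fun l _ => Finset.sum_congr rfl fun k _ => sum_swap' _

lemma Bform_eq (n : ℕ) (W : Fin n → Fin n → Fin n → Fin n → ℝ)
    (x y : Matrix (Fin n) (Fin n) ℝ) :
    Bform n W x y = ∑ i, ∑ j, ∑ k, ∑ l, W k i j l * x l k * y i j := by
  unfold Bform curvAct
  refine Finset.sum_congr rfl fun i _ => Finset.sum_congr rfl fun j _ => ?_
  rw [Finset.sum_mul]
  exact Finset.sum_congr rfl fun k _ => by rw [Finset.sum_mul]

lemma Bform_comm (n : ℕ) (W : Fin n → Fin n → Fin n → Fin n → ℝ)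
    (hp : ∀ i j k l, W i j k l = W k l i j)
    (x y : Matrix (Fin n) (Fin n) ℝ) :
    Bform n W x y = Bform n W y x := by
  rw [Bform_eq, Bform_eq]
  rw [sum4_rev (fun i j k l => W k i j l * y l k * x i j)]
  refine Finset.sum_congr rfl fun i _ => Finset.sum_congr rfl fun j _ =>
    Finset.sum_congr rfl fun k _ => Finset.sum_congr rfl fun l _ => ?_
  rw [hp j l k i]; ring

lemma Bform_add_left (n : ℕ) (W : Fin n → Fin n → Fin n → Fin n → ℝ)
    (x y z : Matrix (Fin n) (Fin n) ℝ) :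
    Bform n W (x + y) z = Bform n W x z + Bform n W y z := by
  simp only [Bform_eq, Matrix.add_apply, mul_add, add_mul, Finset.sum_add_distrib]

lemma Bform_add_right (n : ℕ) (W : Fin n → Fin n → Fin n → Fin n → ℝ)
    (x y z : Matrix (Fin n) (Fin n) ℝ) :
    Bform n W x (y + z) = Bform n W x y + Bform n W x z := by
  simp only [Bform_eq, Matrix.add_apply, mul_add, add_mul, Finset.sum_add_distrib]

lemma Bform_smul_left (n : ℕ) (W : Fin n → Fin n → Fin n → Fin n → ℝ)
    (t : ℝ) (x y : Matrix (Fin n) (Fin n) ℝ) :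
    Bform n W (t • x) y = t * Bform n W x y := by
  simp only [Bform_eq, Matrix.smul_apply, smul_eq_mul, Finset.mul_sum]
  refine Finset.sum_congr rfl fun i _ => Finset.sum_congr rfl fun j _ =>
    Finset.sum_congr rfl fun k _ => Finset.sum_congr rfl fun l _ => by ring

lemma Bform_smul_right (n : ℕ) (W : Fin n → Fin n → Fin n → Fin n → ℝ)
    (t : ℝ) (x y : Matrix (Fin n) (Fin n) ℝ) :
    Bform n W x (t • y) = t * Bform n W x y := by
  simp only [Bform_eq, Matrix.smul_apply, smul_eq_mul, Finset.mul_sum]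
  refine Finset.sum_congr rfl fun i _ => Finset.sum_congr rfl fun j _ =>
    Finset.sum_congr rfl fun k _ => Finset.sum_congr rfl fun l _ => by ring

lemma Q_expand (n : ℕ) (W : Fin n → Fin n → Fin n → Fin n → ℝ)
    (hp : ∀ i j k l, W i j k l = W k l i j)
    (t : ℝ) (x y : Matrix (Fin n) (Fin n) ℝ) :
    Bform n W (x + t • y) (x + t • y)
      = Bform n W x x + 2 * t * Bform n W x y + t ^ 2 * Bform n W y y := by
  have hc : Bform n W y x = Bform n W x y := Bform_comm n W hp y x
  rw [Bform_add_left, Bform_add_right, Bform_add_right, Bform_smul_left,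
    Bform_smul_right, Bform_smul_right, Bform_smul_left, hc]
  ring

/-- Part 1: if `W̊` kills all symmetric tensors, then `W = 0`. -/
lemma part1 (n : ℕ) (W : Fin n → Fin n → Fin n → Fin n → ℝ)
    (hsymm : RiemSymm n W)
    (hvan : ∀ h : Matrix (Fin n) (Fin n) ℝ, h.IsSymm → curvAct n W h = 0) :
    ∀ i j k l, W i j k l = 0 := by
  obtain ⟨ha, hb, hp, hbi⟩ := hsymm
  -- the "sectional" condition
  have C : ∀ a i j b, W a i j b = - W b i j a := by
    intro a i j b
    have h0 : curvAct n W (bas n a b) = 0 := hvan _ (bas_isSymm n a b)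
    have h1 : curvAct n W (bas n a b) i j = 0 := by rw [h0]; rfl
    rw [curvAct_bas] at h1
    linarith
  -- swap of middle two indices changes sign
  have s23 : ∀ i j k l, W i j k l = - W i k j l := by
    intro i j k l
    have e1 : W i j k l = W k l i j := hp i j k l
    have e2 : W k l i j = - W j l i k := C k l i j
    have e3 : W j l i k = W i k j l := hp j l i k
    linarith
  intro i j k l
  have b1 := hbi i j k l
  -- show W j k i l = W i j k l and W k i j l = W i j k l
  have e1 : W j k i l = - W k j i l := ha j k i l
  have e2 : W k j i l = - W k i j l := s23 k j i l
  have e3 : W k i j l = - W i k j l := ha k i j l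
  have e4 : W i k j l = - W i j k l := s23 i k j l
  linarith

/-- trace computation: `∑ Q(basis) = 0`. -/
lemma trace_zero (n : ℕ) (W : Fin n → Fin n → Fin n → Fin n → ℝ)
    (hsymm : RiemSymm n W)
    (htraceless : ∀ j k, ∑ i, W i j k i = 0) :
    ∑ a : Fin n, ∑ b : Fin n, Bform n W (bas n a b) (bas n a b) = 0 := by
  obtain ⟨ha, hb, hp, hbi⟩ := hsymm
  have hQ : ∀ a b : Fin n, Bform n W (bas n a b) (bas n a b) = 2 * W a b a b := by
    intro a b
    unfold Bform
    have hc : ∀ i j : Fin n, curvAct n W (bas n a b) i j = W a i j b + W b i j a :=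
      curvAct_bas n W a b
    calc ∑ i, ∑ j, curvAct n W (bas n a b) i j * bas n a b i j
        = ∑ i, ∑ j, (W a i j b + W b i j a) * bas n a b i j := by
          refine Finset.sum_congr rfl fun i _ => Finset.sum_congr rfl fun j _ => by rw [hc]
      _ = 2 * W a b a b := by
          unfold bas
          simp [mul_add, Finset.sum_add_distrib, ite_and, mul_ite, Finset.sum_ite_eq,
            Finset.sum_ite_eq', add_mul]
          have h1 : W a a b b = 0 := by have := ha a a b b; linarith
          have h2 : W b b a a = 0 := by have := ha b b a a; linarith
          have h3 : W a b a b = W b a b a := by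
            have e1 := ha a b a b
            have e2 := hb b a a b
            linarith
          linarith
  calc ∑ a : Fin n, ∑ b : Fin n, Bform n W (bas n a b) (bas n a b)
      = ∑ a : Fin n, ∑ b : Fin n, 2 * W a b a b := by
        refine Finset.sum_congr rfl fun a _ => Finset.sum_congr rfl fun b _ => hQ a b
    _ = 0 := by
        refine Finset.sum_eq_zero fun a _ => ?_
        have e : ∀ b : Fin n, 2 * W a b a b = (-2) * W b a a b := by
          intro b
          have e1 := hb a b a b
          have e2 := ha a b b a
          have e3 := hb b a a b
          linarith
        rw [Finset.sum_congr rfl fun b _ => e b, ← Finset.mul_sum, htraceless a a, mul_zero]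

lemma sum4_block {n : ℕ} (f : Fin n → Fin n → Fin n → Fin n → ℝ) :
    ∑ i, ∑ j, ∑ k, ∑ l, f i j k l = ∑ i, ∑ j, ∑ k, ∑ l, f k l i j := by
  calc ∑ i, ∑ j, ∑ k, ∑ l, f i j k l
      = ∑ i, ∑ k, ∑ j, ∑ l, f i j k l :=
        Finset.sum_congr rfl fun i _ => sum_swap' _
    _ = ∑ k, ∑ i, ∑ j, ∑ l, f i j k l := sum_swap' _
    _ = ∑ k, ∑ i, ∑ l, ∑ j, f i j k l :=
        Finset.sum_congr rfl fun k _ => Finset.sum_congr rfl fun i _ => sum_swap' _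
    _ = ∑ k, ∑ l, ∑ i, ∑ j, f i j k l :=
        Finset.sum_congr rfl fun k _ => sum_swap' _

lemma Bform_bas_left (n : ℕ) (W : Fin n → Fin n → Fin n → Fin n → ℝ)
    (a b : Fin n) (η : Matrix (Fin n) (Fin n) ℝ) :
    Bform n W (bas n a b) η = ∑ i, ∑ j, (W a i j b + W b i j a) * η i j := by
  unfold Bform
  exact Finset.sum_congr rfl fun i _ => Finset.sum_congr rfl fun j _ => by
    rw [curvAct_bas]

lemma basis_decomp (n : ℕ) (W : Fin n → Fin n → Fin n → Fin n → ℝ)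
    (η : Matrix (Fin n) (Fin n) ℝ) (hη : η.IsSymm) :
    ∑ a, ∑ b, η a b * Bform n W (bas n a b) η = 2 * Bform n W η η := by
  have e1 : ∀ a b, η a b * Bform n W (bas n a b) η
      = (∑ i, ∑ j, W a i j b * η a b * η i j)
        + (∑ i, ∑ j, W b i j a * η a b * η i j) := by
    intro a b
    rw [Bform_bas_left, Finset.mul_sum, ← Finset.sum_add_distrib]
    refine Finset.sum_congr rfl fun i _ => ?_
    rw [Finset.mul_sum, ← Finset.sum_add_distrib]
    exact Finset.sum_congr rfl fun j _ => by ring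
  have e2 : ∑ a, ∑ b, η a b * Bform n W (bas n a b) η
      = (∑ a, ∑ b, ∑ i, ∑ j, W a i j b * η a b * η i j)
        + (∑ a, ∑ b, ∑ i, ∑ j, W b i j a * η a b * η i j) := by
    rw [← Finset.sum_add_distrib]
    refine Finset.sum_congr rfl fun a _ => ?_
    rw [← Finset.sum_add_distrib]
    exact Finset.sum_congr rfl fun b _ => e1 a b
  have e3 : (∑ a, ∑ b, ∑ i, ∑ j, W b i j a * η a b * η i j)
      = ∑ a, ∑ b, ∑ i, ∑ j, W a i j b * η a b * η i j := by
    rw [sum_swap' (fun a b => ∑ i, ∑ j, W b i j a * η a b * η i j)]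
    refine Finset.sum_congr rfl fun a _ => Finset.sum_congr rfl fun b _ =>
      Finset.sum_congr rfl fun i _ => Finset.sum_congr rfl fun j _ => ?_
    rw [hη.apply a b]
  have e4 : Bform n W η η = ∑ a, ∑ b, ∑ i, ∑ j, W a i j b * η a b * η i j := by
    rw [Bform_eq, sum4_block (fun i j k l => W k i j l * η l k * η i j)]
    refine Finset.sum_congr rfl fun a _ => Finset.sum_congr rfl fun b _ =>
      Finset.sum_congr rfl fun i _ => Finset.sum_congr rfl fun j _ => ?_
    rw [hη.apply a b]
  rw [e2, e3, e4]; ring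

lemma Bform_neg (n : ℕ) (W : Fin n → Fin n → Fin n → Fin n → ℝ)
    (x y : Matrix (Fin n) (Fin n) ℝ) :
    Bform n (fun a b c d => -(W a b c d)) x y = -(Bform n W x y) := by
  rw [Bform_eq, Bform_eq]
  simp [Finset.sum_neg_distrib]

lemma curvAct_isSymm (n : ℕ) (W : Fin n → Fin n → Fin n → Fin n → ℝ)
    (hsymm : RiemSymm n W)
    (h : Matrix (Fin n) (Fin n) ℝ) (hh : h.IsSymm) :
    (curvAct n W h).IsSymm := by
  obtain ⟨ha, hb, hp, hbi⟩ := hsymm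
  ext i j
  show curvAct n W h j i = curvAct n W h i j
  unfold curvAct
  rw [sum_swap' (fun k l => W k j i l * h l k)]
  refine Finset.sum_congr rfl fun k _ => Finset.sum_congr rfl fun l _ => ?_
  have e1 : W l j i k = W i k l j := hp l j i k
  have e2 : W i k l j = - W k i l j := ha i k l j
  have e3 : W k i l j = - W k i j l := hb k i l j
  have e4 : h k l = h l k := hh.apply l k
  have e : W l j i k = W k i j l := by linarith
  rw [e, e4]

/-- If `W̊` is positive semidefinite on symmetric tensors and trace-free, it vanishes. -/
lemma psd_zero (n : ℕ) (W : Fin n → Fin n → Fin n → Fin n → ℝ)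
    (hsymm : RiemSymm n W)
    (htraceless : ∀ j k, ∑ i, W i j k i = 0)
    (hpos : ∀ η : Matrix (Fin n) (Fin n) ℝ, η.IsSymm → 0 ≤ Bform n W η η) :
    ∀ η : Matrix (Fin n) (Fin n) ℝ, η.IsSymm → Bform n W η η = 0 := by
  have hp := hsymm.2.2.1
  intro η hη
  have hb0 : ∀ a b, Bform n W (bas n a b) (bas n a b) = 0 := by
    have ht := trace_zero n W hsymm htraceless
    have hnn : ∀ a ∈ (Finset.univ : Finset (Fin n)),
        0 ≤ ∑ b, Bform n W (bas n a b) (bas n a b) :=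
      fun a _ => Finset.sum_nonneg fun b _ => hpos _ (bas_isSymm n a b)
    intro a b
    have h2 := (Finset.sum_eq_zero_iff_of_nonneg hnn).mp ht a (Finset.mem_univ a)
    exact (Finset.sum_eq_zero_iff_of_nonneg
      (fun b _ => hpos _ (bas_isSymm n a b))).mp h2 b (Finset.mem_univ b)
  have hQnn : 0 ≤ Bform n W η η := hpos η hη
  have hB0 : ∀ a b, Bform n W (bas n a b) η = 0 := by
    intro a b
    set B := Bform n W (bas n a b) η with hBdef
    set Q := Bform n W η η with hQdef
    have key : ∀ t : ℝ, 0 ≤ 2 * t * B + t ^ 2 * Q := by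
      intro t
      have hs : (bas n a b + t • η).IsSymm := (bas_isSymm n a b).add (hη.smul t)
      have h5 := hpos _ hs
      rw [Q_expand n W hp t (bas n a b) η, hb0 a b] at h5
      linarith
    rcases eq_or_lt_of_le hQnn with hq | hq
    · have k1 := key 1
      have k2 := key (-1)
      norm_num at k1 k2
      linarith
    · have hk := key (-(B / Q))
      have hexp : 2 * (-(B / Q)) * B + (-(B / Q)) ^ 2 * Q = -(B ^ 2 / Q) := by
        field_simp
        ring
      rw [hexp] at hk
      have hb2 : B ^ 2 ≤ 0 := by
        have h3 : B ^ 2 / Q ≤ 0 := by linarith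
        calc B ^ 2 = B ^ 2 / Q * Q := by field_simp
          _ ≤ 0 := mul_nonpos_of_nonpos_of_nonneg h3 (le_of_lt hq)
      have hB2 : B ^ 2 = 0 := le_antisymm hb2 (sq_nonneg B)
      exact pow_eq_zero_iff (by norm_num) |>.mp hB2
  have hdec := basis_decomp n W η hη
  have hz : ∑ a, ∑ b, η a b * Bform n W (bas n a b) η = 0 :=
    Finset.sum_eq_zero fun a _ => Finset.sum_eq_zero fun b _ => by rw [hB0 a b, mul_zero]
  rw [hz] at hdec
  linarith

/-- If the induced operator `W̊` on symmetric `(0,2)`-tensors vanishes,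
then the Weyl tensor vanishes; in particular, if `W ≠ 0` then `W̊` is indefinite:
there are symmetric tensors `η` with `⟨W̊η, η⟩ > 0` and with `⟨W̊η, η⟩ < 0`. -/
theorem weylAction_vanishes_iff_weyl_vanishes (n : ℕ)
    (W : Fin n → Fin n → Fin n → Fin n → ℝ)
    (hsymm : RiemSymm n W)
    (htraceless : ∀ j k, ∑ i, W i j k i = 0) :
    ((∀ h : Matrix (Fin n) (Fin n) ℝ, h.IsSymm → curvAct n W h = 0) →
      ∀ i j k l, W i j k l = 0) ∧
    ((∃ i j k l, W i j k l ≠ 0) →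
      (∃ η : Matrix (Fin n) (Fin n) ℝ, η.IsSymm ∧
        0 < ∑ i, ∑ j, curvAct n W η i j * η i j) ∧
      (∃ η : Matrix (Fin n) (Fin n) ℝ, η.IsSymm ∧
        ∑ i, ∑ j, curvAct n W η i j * η i j < 0)) := by
  constructor
  · exact part1 n W hsymm
  intro hW
  have hp := hsymm.2.2.1
  -- there is a symmetric h with nonzero image
  have hex : ∃ h : Matrix (Fin n) (Fin n) ℝ, h.IsSymm ∧ curvAct n W h ≠ 0 := by
    by_contra hcon
    push_neg at hcon
    obtain ⟨i, j, k, l, hne⟩ := hW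
    exact hne (part1 n W hsymm hcon i j k l)
  obtain ⟨h, hhs, hm⟩ := hex
  -- there is a symmetric η₀ with nonzero quadratic form
  have hexQ : ∃ η : Matrix (Fin n) (Fin n) ℝ, η.IsSymm ∧ Bform n W η η ≠ 0 := by
    by_contra hcon
    push_neg at hcon
    set m := curvAct n W h with hmdef
    have hms : m.IsSymm := curvAct_isSymm n W hsymm h hhs
    have hsum : (h + m).IsSymm := hhs.add hms
    have h0 : Bform n W (h + m) (h + m) = 0 := hcon _ hsum
    rw [Bform_add_left, Bform_add_right, Bform_add_right] at h0
    have hc : Bform n W m h = Bform n W h m := Bform_comm n W hp m h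
    rw [hc, hcon h hhs, hcon m hms] at h0
    have hBm : Bform n W h m = 0 := by linarith
    have hsq : ∑ i, ∑ j, m i j * m i j = 0 := hBm
    have hmz : ∀ i j, m i j = 0 := by
      intro i j
      have h1 := (Finset.sum_eq_zero_iff_of_nonneg
        (fun i _ => Finset.sum_nonneg fun j _ => mul_self_nonneg (m i j))).mp hsq i
        (Finset.mem_univ i)
      have h2 := (Finset.sum_eq_zero_iff_of_nonneg
        (fun j _ => mul_self_nonneg (m i j))).mp h1 j (Finset.mem_univ j)
      exact mul_self_eq_zero.mp h2
    exact hm (by ext i j; exact hmz i j)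
  obtain ⟨η₀, hη₀s, hη₀⟩ := hexQ
  constructor
  · -- positive direction: if not, -W induces a PSD form
    by_contra hcon
    push_neg at hcon
    set W' : Fin n → Fin n → Fin n → Fin n → ℝ := fun a b c d => -(W a b c d) with hW'def
    have hsymm' : RiemSymm n W' := by
      obtain ⟨ha, hb, hpp, hbi⟩ := hsymm
      refine ⟨fun i j k l => ?_, fun i j k l => ?_, fun i j k l => ?_, fun i j k l => ?_⟩ <;>
        simp only [hW'def] <;> [skip; skip; skip; skip]
      · have := ha i j k l; linarith
      · have := hb i j k l; linarith
      · have := hpp i j k l; linarith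
      · have := hbi i j k l; linarith
    have htr' : ∀ j k, ∑ i, W' i j k i = 0 := by
      intro j k
      simp only [hW'def]
      rw [Finset.sum_neg_distrib, htraceless j k, neg_zero]
    have hpos' : ∀ η : Matrix (Fin n) (Fin n) ℝ, η.IsSymm → 0 ≤ Bform n W' η η := by
      intro η hηs
      rw [hW'def, Bform_neg]
      have : Bform n W η η ≤ 0 := hcon η hηs
      linarith
    have hz := psd_zero n W' hsymm' htr' hpos' η₀ hη₀s
    rw [hW'def, Bform_neg] at hz
    exact hη₀ (by linarith)
  · -- negative direction: if not, W induces a PSD form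
    by_contra hcon
    push_neg at hcon
    have hpos : ∀ η : Matrix (Fin n) (Fin n) ℝ, η.IsSymm → 0 ≤ Bform n W η η :=
      fun η hηs => hcon η hηs
    exact hη₀ (psd_zero n W hsymm htraceless hpos η₀ hη₀s)
end

section
/- Let (M,g,J) be a compact Kähler–Einstein manifold with positive Einstein constant μ. If the largest pointwise eigenvalue b of the Bochner action B̊ on symmetric (0,2)-tensors satisfies ‖b‖_{L^∞} ≤ μ(n−2)/(2(n+2)), then Δ_E is nonnegative on TT-tensors. -/
open scoped RealInnerProductSpace

/-- (Theorem `bochnerthm1`.) Let `(M,g,J)` be a compact Kähler–Einstein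
manifold with positive Einstein constant `μ`. If the largest pointwise eigenvalue `b` of
the Bochner action `B̊` on symmetric `(0,2)`-tensors satisfies
`‖b‖_∞ ≤ μ(n−2)/(2(n+2))`, then the Einstein operator is nonnegative on TT-tensors.
The `L²`-space is abstracted to a real inner product space; the Bochner formula (with
`δh = 0` on TT), the Bochner-tensor decomposition of `R̊` with Cauchy–Schwarz, and the
eigenvalue bound `(B̊h,h) ≤ ‖b‖_∞‖h‖²` are assumed, as in the paper. -/
theorem stability_positive_KE_from_bochner_sup_bound
    {H : Type*} [NormedAddCommGroup H] [InnerProductSpace ℝ H]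
    (n : ℕ) (hn : 3 ≤ n) (μ bInfty : ℝ) (hμ : 0 < μ) (hbInfty : 0 ≤ bInfty)
    (TT : Submodule ℝ H) (ΔE : H →ₗ[ℝ] H)
    (D1sq Rt Bt : H → ℝ)  -- `‖D₁h‖²`, `(R̊h,h)_{L²}` and `(B̊h,h)_{L²}`
    (hD1 : ∀ h, 0 ≤ D1sq h)
    (hBochner1 : ∀ h ∈ TT, ⟪ΔE h, h⟫ = D1sq h + 2 * μ * ‖h‖ ^ 2 - 4 * Rt h)
    (hRB : ∀ h ∈ TT, Rt h ≤ Bt h + 2 * μ / ((n : ℝ) + 2) * ‖h‖ ^ 2)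
    (hBb : ∀ h ∈ TT, Bt h ≤ bInfty * ‖h‖ ^ 2)
    (hcond : bInfty ≤ μ * ((n : ℝ) - 2) / (2 * ((n : ℝ) + 2))) :
    ∀ h ∈ TT, 0 ≤ ⟪ΔE h, h⟫ := by
  intro h hh
  have hB := hBochner1 h hh
  have hR := hRB h hh
  have hBb' := hBb h hh
  have hD := hD1 h
  have hn' : (2:ℝ) ≤ (n:ℝ) := by exact_mod_cast (by omega : 2 ≤ n)
  have hpos : (0:ℝ) < (n:ℝ) + 2 := by linarith
  have hsq : (0:ℝ) ≤ ‖h‖ ^ 2 := sq_nonneg _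
  rw [hB]
  have key : 4 * Rt h ≤ 2 * μ * ‖h‖ ^ 2 := by
    have h1 : Rt h ≤ bInfty * ‖h‖ ^ 2 + 2 * μ / ((n:ℝ) + 2) * ‖h‖ ^ 2 := by linarith
    have h2 : bInfty * ‖h‖ ^ 2 ≤ μ * ((n:ℝ) - 2) / (2 * ((n:ℝ) + 2)) * ‖h‖ ^ 2 :=
      mul_le_mul_of_nonneg_right hcond hsq
    have h3 : 4 * (μ * ((n:ℝ) - 2) / (2 * ((n:ℝ) + 2)) * ‖h‖ ^ 2
        + 2 * μ / ((n:ℝ) + 2) * ‖h‖ ^ 2) = 2 * μ * ‖h‖ ^ 2 := by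
      field_simp
      ring
    nlinarith
  linarith
end
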